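/- Let m, n ≥ 1 be integers and consider the string rewriting system on the alphabet {a, b} with the rules (i) (b a^n)^m (a^n b)^m a → a and (ii) (b a^n)^m (a^n b)^{m−i} a^{n+1} → (a^n b)^{m−i} a^n (a^n b)^m a for 1 ≤ i ≤ m, where one rewriting step replaces an occurrence of a left-hand side as a factor of a word by the corresponding right-hand side. Then: (a) the equivalence relation generated by one-step rewriting coincides with the congruence on {a, b}* generated by the single defining relation (b a^n)^m (a^n b)^m a = a, so the system presents the monoid R_{m,n}; (b) the one-step rewriting relation is terminating (there is no infinite sequence of rewriting steps; equivalently the converse relation is well-founded); (c) the one-step rewriting relation is confluent: whenever a word w rewrites (in zero or more steps) to both w₁ and w₂, there is a word w₃ to which both w₁ and w₂ rewrite in zero or more steps. -/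

import Mathlib

/-- The `i`-fold concatenation of a word with itself. -/
def listPow {σ : Type*} (w : List σ) (i : ℕ) : List σ :=
  (List.replicate i w).flatten

/-- The letter `a`. -/
def aw : List (Fin 2) := [0]

/-- The letter `b`. -/
def bw : List (Fin 2) := [1]

/-- The left-hand side `(b a^n)^m (a^n b)^m a` of rule (i). -/
def lhs₀ (m n : ℕ) : List (Fin 2) :=
  listPow (bw ++ listPow aw n) m ++ listPow (listPow aw n ++ bw) m ++ aw

/-- The left-hand side `(b a^n)^m (a^n b)^{m−i} a^{n+1}` of rule (ii). -/
def lhsᵢ (m n i : ℕ) : List (Fin 2) :=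
  listPow (bw ++ listPow aw n) m ++ listPow (listPow aw n ++ bw) (m - i) ++
    listPow aw (n + 1)

/-- The right-hand side `(a^n b)^{m−i} a^n (a^n b)^m a` of rule (ii). -/
def rhsᵢ (m n i : ℕ) : List (Fin 2) :=
  listPow (listPow aw n ++ bw) (m - i) ++ listPow aw n ++
    listPow (listPow aw n ++ bw) m ++ aw

/-- The rules of the rewriting system: rule (i) `(b a^n)^m (a^n b)^m a → a`, and, for
`1 ≤ i ≤ m`, rule (ii) `(b a^n)^m (a^n b)^{m−i} a^{n+1} → (a^n b)^{m−i} a^n (a^n b)^m a`. -/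
def RewriteRule (m n : ℕ) (l r : List (Fin 2)) : Prop :=
  (l = lhs₀ m n ∧ r = aw) ∨
    ∃ i : ℕ, 1 ≤ i ∧ i ≤ m ∧ l = lhsᵢ m n i ∧ r = rhsᵢ m n i

/-- One-step rewriting: replace an occurrence of a left-hand side as a factor by the
corresponding right-hand side. -/
def RewriteStep (m n : ℕ) (x y : List (Fin 2)) : Prop :=
  ∃ u v l r : List (Fin 2), RewriteRule m n l r ∧ x = u ++ l ++ v ∧ y = u ++ r ++ v

/-!
Every rule lowers the number of pairs `(b, a)` with the `b` to the left of the `a` without raising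
the number of either letter (rule (ii) keeps the letters and lowers it by `2mn`), so rewriting
terminates, and by Newman's lemma confluence reduces to joining the overlaps of left-hand sides.
Every left-hand side starts with `(b aⁿ)ᵐ a`, and the number of leading blocks `b aⁿ` pins down
where a second left-hand side can start inside a first one: apart from coinciding left-hand sides,
the only overlap is the suffix `b (aⁿ b)ᵏ a` (`k < m`) of `(b aⁿ)ᵐ (aⁿ b)ᵐ a`, and both of its
critical pairs are joined by rule (ii) with `i = k + 1`, followed in one case by rule (i). All the
word identities involved come from `(aⁿ b)ᵏ aⁿ = aⁿ (b aⁿ)ᵏ`. Finally, rule (ii) is a consequence of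
the defining relation, so the rules generate the same congruence as that relation.
-/

section listPow

variable {α : Type*}

@[simp]
theorem listPow_zero (w : List α) : listPow w 0 = [] := rfl

theorem listPow_succ (w : List α) (k : ℕ) : listPow w (k + 1) = w ++ listPow w k := by
  simp [listPow, List.replicate_succ]

theorem listPow_add (w : List α) (j k : ℕ) : listPow w (j + k) = listPow w j ++ listPow w k := by
  rw [listPow, List.replicate_add, List.flatten_append, listPow, listPow]

theorem listPow_append_listPow_append (w : List α) (j k : ℕ) (z : List α) :
    listPow w j ++ (listPow w k ++ z) = listPow w (j + k) ++ z := by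
  rw [listPow_add, List.append_assoc]

theorem listPow_succ' (w : List α) (k : ℕ) : listPow w (k + 1) = listPow w k ++ w := by
  rw [listPow_add, listPow, listPow, List.replicate_one, List.flatten_singleton]

theorem listPow_append_append_comm (u v : List α) (k : ℕ) :
    listPow (u ++ v) k ++ u = u ++ listPow (v ++ u) k := by
  induction k with
  | zero => simp
  | succ k ih => simp [listPow_succ, ih]

@[simp]
theorem count_listPow [BEq α] (a : α) (w : List α) (k : ℕ) :
    (listPow w k).count a = k * w.count a := by
  simp [listPow, List.count_flatten]

theorem mem_listPow {a : α} {w : List α} {k : ℕ} (h : a ∈ listPow w k) : a ∈ w := by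
  simp_all [listPow]

theorem append_eq_append_cons_of_notMem {b : α} {p x s t : List α} (hp : b ∉ p)
    (h : p ++ x = s ++ b :: t) : ∃ s', s = p ++ s' ∧ x = s' ++ b :: t := by
  rcases List.append_eq_append_iff.1 h with ⟨s', rfl, hx⟩ | ⟨_ | ⟨c, p'⟩, rfl, hb⟩
  · exact ⟨s', rfl, hx⟩
  · exact ⟨[], by simp, by simpa using hb.symm⟩
  · obtain ⟨rfl, -⟩ := List.cons_eq_cons.1 hb
    simp at hp

theorem listPow_append_eq_append_cons {b : α} {p q s t z : List α} (hp : b ∉ p) (hq : b ∉ q)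
    {k : ℕ} (h : listPow (p ++ b :: q) k ++ z = s ++ b :: t) :
    (∃ j k', k = j + k' + 1 ∧ s = listPow (p ++ b :: q) j ++ p ∧
      t = q ++ listPow (p ++ b :: q) k' ++ z) ∨
    ∃ s', s = listPow (p ++ b :: q) k ++ s' ∧ z = s' ++ b :: t := by
  induction k generalizing s with
  | zero => exact .inr ⟨s, by simp, by simpa using h⟩
  | succ k ih =>
    rw [listPow_succ] at h
    simp only [List.append_assoc, List.cons_append] at h
    obtain ⟨_ | ⟨c, s'⟩, rfl, hs⟩ := append_eq_append_cons_of_notMem hp h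
    · obtain ⟨-, rfl⟩ := List.cons_eq_cons.1 hs
      exact .inl ⟨0, k, by omega, by simp, by simp⟩
    rw [List.cons_append] at hs
    obtain ⟨rfl, hq'⟩ := List.cons_eq_cons.1 hs
    obtain ⟨s'', rfl, hz⟩ := append_eq_append_cons_of_notMem hq hq'
    rcases ih hz with ⟨j, k', rfl, rfl, rfl⟩ | ⟨s₃, rfl, rfl⟩
    · exact .inl ⟨j + 1, k', by omega, by simp [listPow_succ], rfl⟩
    · exact .inr ⟨s₃, by simp [listPow_succ], rfl⟩

end listPow

open Relation

theorem Relation.EqvGen.map {α β : Type*} {r : α → α → Prop} {s : β → β → Prop} {a b : α}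
    (h : EqvGen r a b) (f : α → β) (hf : ∀ a b, r a b → s (f a) (f b)) :
    EqvGen s (f a) (f b) := by
  rw [← EqvGen.reflTransGen_symmGen] at h ⊢
  exact h.lift f fun a b => Or.imp (hf a b) (hf b a)

namespace StringRewriting

variable {α : Type*} {ρ : List α → List α → Prop}

variable (ρ) in
/-- `RewriteStep m n` is `Step (RewriteRule m n)` by definition. -/
def Step (x y : List α) : Prop :=
  ∃ u v l r, ρ l r ∧ x = u ++ l ++ v ∧ y = u ++ r ++ v

theorem Step.of_rule {l r : List α} (h : ρ l r) : Step ρ l r :=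
  ⟨[], [], l, r, h, by simp, by simp⟩

theorem Step.append_left (z : List α) {x y : List α} (h : Step ρ x y) :
    Step ρ (z ++ x) (z ++ y) := by
  obtain ⟨u, v, l, r, hlr, rfl, rfl⟩ := h
  exact ⟨z ++ u, v, l, r, hlr, by simp, by simp⟩

theorem Step.append_right (z : List α) {x y : List α} (h : Step ρ x y) :
    Step ρ (x ++ z) (y ++ z) := by
  obtain ⟨u, v, l, r, hlr, rfl, rfl⟩ := h
  exact ⟨u, v ++ z, l, r, hlr, by simp, by simp⟩

theorem Step.context {u v l r : List α} (h : ρ l r) : Step ρ (u ++ l ++ v) (u ++ r ++ v) :=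
  ⟨u, v, l, r, h, rfl, rfl⟩

theorem join_append_left (z : List α) {x y : List α} (h : Join (ReflTransGen (Step ρ)) x y) :
    Join (ReflTransGen (Step ρ)) (z ++ x) (z ++ y) :=
  let ⟨w, hx, hy⟩ := h
  ⟨z ++ w, hx.lift (z ++ ·) fun _ _ => Step.append_left z,
    hy.lift (z ++ ·) fun _ _ => Step.append_left z⟩

theorem join_append_right (z : List α) {x y : List α} (h : Join (ReflTransGen (Step ρ)) x y) :
    Join (ReflTransGen (Step ρ)) (x ++ z) (y ++ z) :=
  let ⟨w, hx, hy⟩ := h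
  ⟨w ++ z, hx.lift (· ++ z) fun _ _ => Step.append_right z,
    hy.lift (· ++ z) fun _ _ => Step.append_right z⟩

theorem eqvGen_step_append {x x' y y' : List α} (hx : EqvGen (Step ρ) x x')
    (hy : EqvGen (Step ρ) y y') : EqvGen (Step ρ) (x ++ y) (x' ++ y') :=
  (hx.map (· ++ y) fun _ _ => Step.append_right y).trans _ _ _
    (hy.map (x' ++ ·) fun _ _ => Step.append_left x')

theorem con_ofList_append {c : Con (FreeMonoid α)} {x y : List α} (u v : List α)
    (h : c (.ofList x) (.ofList y)) : c (.ofList (u ++ x ++ v)) (.ofList (u ++ y ++ v)) := by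
  simpa only [FreeMonoid.ofList_append] using
    c.mul (c.mul (c.refl (.ofList u)) h) (c.refl (.ofList v))

theorem eqvGen_step_iff_conGen {x y : List α} :
    EqvGen (Step ρ) x y ↔
      conGen (fun p q : FreeMonoid α => ρ p.toList q.toList) (.ofList x) (.ofList y) := by
  constructor
  · intro h
    induction h with
    | rel _ _ h =>
      obtain ⟨u, v, l, r, hlr, rfl, rfl⟩ := h
      exact con_ofList_append u v (ConGen.Rel.of _ _ hlr)
    | refl => exact Con.refl _ _
    | symm _ _ _ ih => exact Con.symm _ ih
    | trans _ _ _ _ _ ih₁ ih₂ => exact Con.trans _ ih₁ ih₂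
  · intro h
    suffices ∀ p q, ConGen.Rel (fun p q : FreeMonoid α => ρ p.toList q.toList) p q →
        EqvGen (Step ρ) p.toList q.toList from this _ _ h
    intro p q h
    induction h with
    | of _ _ h => exact .rel _ _ (Step.of_rule h)
    | refl => exact .refl _
    | symm _ ih => exact .symm _ _ ih
    | trans _ _ ih₁ ih₂ => exact .trans _ _ _ ih₁ ih₂
    | mul _ _ ih₁ ih₂ => exact eqvGen_step_append ih₁ ih₂

variable (ρ) in
/-- The left-hand side `l₂` starts inside `l₁ = s ++ t`, right after `s`; this covers proper
overlaps as well as inclusions. -/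
def OverlapsJoinable : Prop :=
  ∀ l₁ r₁ l₂ r₂ s t v₁ v₂, ρ l₁ r₁ → ρ l₂ r₂ → l₁ = s ++ t → t ≠ [] → t ++ v₁ = l₂ ++ v₂ →
    Join (ReflTransGen (Step ρ)) (r₁ ++ v₁) (s ++ r₂ ++ v₂)

theorem OverlapsJoinable.join_of_append_eq (hρ : OverlapsJoinable ρ)
    {l₁ r₁ l₂ r₂ s v₁ v₂ : List α} (h₁ : ρ l₁ r₁) (h₂ : ρ l₂ r₂)
    (h : l₁ ++ v₁ = s ++ (l₂ ++ v₂)) :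
    Join (ReflTransGen (Step ρ)) (r₁ ++ v₁) (s ++ (r₂ ++ v₂)) := by
  rcases List.append_eq_append_iff.1 h with ⟨z, rfl, rfl⟩ | ⟨t, rfl, ht⟩
  · exact ⟨r₁ ++ z ++ r₂ ++ v₂, .single (by simpa using Step.context (u := r₁ ++ z) h₂),
      .single (by simpa using Step.context (u := []) (v := z ++ r₂ ++ v₂) h₁)⟩
  · obtain rfl | hne := eq_or_ne t []
    · rw [List.nil_append] at ht
      subst ht
      exact ⟨r₁ ++ r₂ ++ v₂, .single (by simpa using Step.context (u := r₁) h₂),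
        .single (by simpa using Step.context (u := []) (v := r₂ ++ v₂) h₁)⟩
    · simpa using hρ _ _ _ _ _ _ _ _ h₁ h₂ rfl hne ht.symm

/-- The critical pair lemma. -/
theorem OverlapsJoinable.join_of_step_of_step (hρ : OverlapsJoinable ρ)
    {w w₁ w₂ : List α} (h₁ : Step ρ w w₁) (h₂ : Step ρ w w₂) :
    Join (ReflTransGen (Step ρ)) w₁ w₂ := by
  obtain ⟨u₁, v₁, l₁, r₁, hr₁, rfl, rfl⟩ := h₁
  obtain ⟨u₂, v₂, l₂, r₂, hr₂, h, rfl⟩ := h₂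
  simp only [List.append_assoc] at h ⊢
  rcases List.append_eq_append_iff.1 h with ⟨s, rfl, hs⟩ | ⟨s, rfl, hs⟩
  · simpa using join_append_left u₁ (hρ.join_of_append_eq hr₁ hr₂ hs)
  · simpa using symm_of (Join _) (join_append_left u₂ (hρ.join_of_append_eq hr₂ hr₁ hs))

/-- Newman's lemma. -/
theorem join_of_reflTransGen_of_wellFounded {r : α → α → Prop}
    (wf : WellFounded (fun x y => r y x))
    (hloc : ∀ {w w₁ w₂}, r w w₁ → r w w₂ → Join (ReflTransGen r) w₁ w₂) {w w₁ w₂ : α}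
    (h₁ : ReflTransGen r w w₁) (h₂ : ReflTransGen r w w₂) : Join (ReflTransGen r) w₁ w₂ := by
  induction w using wf.induction generalizing w₁ w₂ with
  | _ w ih =>
    rcases h₁.cases_head with rfl | ⟨x₁, hwx₁, hx₁⟩
    · exact ⟨w₂, h₂, .refl⟩
    rcases h₂.cases_head with rfl | ⟨x₂, hwx₂, hx₂⟩
    · exact ⟨w₁, .refl, h₁⟩
    obtain ⟨y, hy₁, hy₂⟩ := hloc hwx₁ hwx₂
    obtain ⟨z₁, hz₁, hyz₁⟩ := ih x₁ hwx₁ hx₁ hy₁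
    obtain ⟨z₂, hz₂, hz₁z₂⟩ := ih x₂ hwx₂ hx₂ (hy₂.trans hyz₁)
    exact ⟨z₂, hz₁.trans hz₁z₂, hz₂⟩

end StringRewriting

open StringRewriting

/-- The number of pairs of letters `b = 1` and `a = 0` with the `b` to the left of the `a`. -/
def inversions : List (Fin 2) → ℕ
  | [] => 0
  | x :: w => (if x = 1 then w.count 0 else 0) + inversions w

theorem inversions_append (u v : List (Fin 2)) :
    inversions (u ++ v) = inversions u + inversions v + u.count 1 * v.count 0 := by
  induction u with
  | nil => simp [inversions]
  | cons x u ih =>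
    rcases Fin.exists_fin_two.1 ⟨x, rfl⟩ with rfl | rfl
    · simp [inversions, ih]
    · simp [inversions, ih]
      ring

theorem inversions_eq_zero_of_count_one {w : List (Fin 2)} (h : w.count 1 = 0) :
    inversions w = 0 := by
  induction w with
  | nil => rfl
  | cons x w ih =>
    rcases Fin.exists_fin_two.1 ⟨x, rfl⟩ with rfl | rfl <;> simp_all [inversions]

theorem wellFounded_step_of_inversions {ρ : List (Fin 2) → List (Fin 2) → Prop}
    (hρ : ∀ l r, ρ l r → inversions r < inversions l ∧ r.count 0 ≤ l.count 0 ∧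
      r.count 1 ≤ l.count 1) :
    WellFounded (fun x y => Step ρ y x) := by
  refine Subrelation.wf (fun {y x} h => ?_) (measure inversions).wf
  obtain ⟨u, v, l, r, hlr, rfl, rfl⟩ := h
  obtain ⟨hinv, h₀, h₁⟩ := hρ l r hlr
  change inversions _ < inversions _
  simp only [inversions_append, List.count_append]
  nlinarith [Nat.mul_le_mul h₁ (le_refl (v.count 0)),
    Nat.mul_le_mul (le_refl (u.count 1)) (Nat.add_le_add h₀ (le_refl (v.count 0)))]

def baPow (n k : ℕ) : List (Fin 2) := listPow (bw ++ listPow aw n) k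

def abPow (n k : ℕ) : List (Fin 2) := listPow (listPow aw n ++ bw) k

theorem lhs₀_eq (m n : ℕ) : lhs₀ m n = baPow n m ++ abPow n m ++ aw := rfl

theorem lhsᵢ_eq (m n i : ℕ) :
    lhsᵢ m n i = baPow n m ++ abPow n (m - i) ++ listPow aw (n + 1) := rfl

theorem rhsᵢ_eq (m n i : ℕ) :
    rhsᵢ m n i = abPow n (m - i) ++ listPow aw n ++ abPow n m ++ aw := rfl

theorem abPow_append_aPow (n k : ℕ) :
    abPow n k ++ listPow aw n = listPow aw n ++ baPow n k :=
  listPow_append_append_comm _ _ k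

theorem abPow_append_aPow_append (n k : ℕ) (z : List (Fin 2)) :
    abPow n k ++ (listPow aw n ++ z) = listPow aw n ++ (baPow n k ++ z) := by
  rw [← List.append_assoc, abPow_append_aPow, List.append_assoc]

theorem baPow_add (n j k : ℕ) : baPow n (j + k) = baPow n j ++ baPow n k := listPow_add _ j k

theorem baPow_append_baPow_append (n j k : ℕ) (z : List (Fin 2)) :
    baPow n j ++ (baPow n k ++ z) = baPow n (j + k) ++ z :=
  listPow_append_listPow_append _ j k z

theorem abPow_add (n j k : ℕ) : abPow n (j + k) = abPow n j ++ abPow n k := listPow_add _ j k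

theorem baPow_succ (n k : ℕ) : baPow n (k + 1) = bw ++ listPow aw n ++ baPow n k :=
  listPow_succ _ k

theorem abPow_succ (n k : ℕ) : abPow n (k + 1) = listPow aw n ++ bw ++ abPow n k :=
  listPow_succ _ k

@[simp]
theorem count_zero_baPow (n k : ℕ) : (baPow n k).count 0 = k * n := by
  simp [baPow, aw, bw]

@[simp]
theorem count_one_baPow (n k : ℕ) : (baPow n k).count 1 = k := by
  simp [baPow, aw, bw]

@[simp]
theorem count_zero_abPow (n k : ℕ) : (abPow n k).count 0 = k * n := by
  simp [abPow, aw, bw]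

@[simp]
theorem count_one_abPow (n k : ℕ) : (abPow n k).count 1 = k := by
  simp [abPow, aw, bw]

theorem inversions_baPow (n k : ℕ) : inversions (baPow n k) = inversions (abPow n k) + k * n := by
  have h := congrArg inversions (abPow_append_aPow n k)
  simp only [inversions_append, inversions_eq_zero_of_count_one (w := listPow aw n) (by simp [aw])]
    at h
  simp [aw] at h
  linarith

theorem RewriteRule.inversions_lt {m n : ℕ} (hm : 1 ≤ m) (hn : 1 ≤ n) {l r : List (Fin 2)}
    (h : RewriteRule m n l r) :
    inversions r < inversions l ∧ r.count 0 ≤ l.count 0 ∧ r.count 1 ≤ l.count 1 := by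
  have ha : ∀ k, inversions (listPow aw k) = 0 := fun k =>
    inversions_eq_zero_of_count_one (by simp [aw])
  rcases h with ⟨rfl, rfl⟩ | ⟨i, -, -, rfl, rfl⟩
  · simp [lhs₀_eq, inversions_append, aw, inversions]
    omega
  · simp only [lhsᵢ_eq, rhsᵢ_eq, inversions_append, inversions_baPow, ha]
    simp [aw, inversions]
    generalize m - i = d
    refine ⟨?_, by ring_nf; omega, by omega⟩
    nlinarith [Nat.mul_le_mul hm hn]

theorem wellFounded_rewriteStep {m n : ℕ} (hm : 1 ≤ m) (hn : 1 ≤ n) :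
    WellFounded (fun x y => RewriteStep m n y x) :=
  wellFounded_step_of_inversions fun _ _ => RewriteRule.inversions_lt hm hn

/-- With `X = (b aⁿ)ᵐ (aⁿ b)^(m-i) aⁿ` one has `lhsᵢ = X a` and `a Z = rhsᵢ` for a word `Z` with
`X lhs₀ = lhs₀ Z`, so two uses of the relation `lhs₀ = a` turn `lhsᵢ` into `rhsᵢ`. -/
theorem conGen_lhsᵢ_rhsᵢ {m n : ℕ} (hn : 1 ≤ n) (i : ℕ) :
    conGen (fun p q : FreeMonoid (Fin 2) => p = .ofList (lhs₀ m n) ∧ q = .ofList aw)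
      (.ofList (lhsᵢ m n i)) (.ofList (rhsᵢ m n i)) := by
  obtain ⟨n, rfl⟩ := Nat.exists_eq_add_of_le' hn
  set c := conGen (fun p q : FreeMonoid (Fin 2) => p = .ofList (lhs₀ m (n + 1)) ∧ q = .ofList aw)
  have hc : c (.ofList (lhs₀ m (n + 1))) (.ofList aw) := ConGen.Rel.of _ _ ⟨rfl, rfl⟩
  set X := baPow (n + 1) m ++ abPow (n + 1) (m - i) ++ listPow aw (n + 1)
  set Z := listPow aw n ++ baPow (n + 1) (m - i) ++ abPow (n + 1) m ++ aw
  have hX : lhsᵢ m (n + 1) i = X ++ aw := by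
    rw [lhsᵢ_eq, listPow_succ' _ (n + 1), List.append_assoc _ (listPow aw (n + 1))]
  have hZ : aw ++ Z = rhsᵢ m (n + 1) i := by
    simp only [Z, rhsᵢ_eq, List.append_assoc]
    rw [abPow_append_aPow_append, ← List.append_assoc aw, ← listPow_succ]
  have hXZ : X ++ lhs₀ m (n + 1) = lhs₀ m (n + 1) ++ Z := by
    simp only [X, Z, lhs₀_eq, List.append_assoc, List.append_cancel_left_eq]
    rw [abPow_append_aPow_append, ← List.append_assoc aw, ← listPow_succ,
      abPow_append_aPow_append, baPow_append_baPow_append, baPow_append_baPow_append,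
      Nat.add_comm m]
  have h₁ : c (.ofList (X ++ aw)) (.ofList (X ++ lhs₀ m (n + 1))) := by
    simpa using con_ofList_append (c := c) X [] (c.symm hc)
  have h₂ : c (.ofList (lhs₀ m (n + 1) ++ Z)) (.ofList (aw ++ Z)) := by
    simpa using con_ofList_append (c := c) [] Z hc
  rw [hX, ← hZ]
  exact c.trans h₁ (hXZ ▸ h₂)

theorem conGen_rewriteRule_eq {m n : ℕ} (hn : 1 ≤ n) :
    conGen (fun p q : FreeMonoid (Fin 2) => RewriteRule m n p.toList q.toList) =
      conGen (fun p q => p = FreeMonoid.ofList (lhs₀ m n) ∧ q = FreeMonoid.ofList aw) := by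
  refine le_antisymm (Con.conGen_le.2 fun p q h => ?_) (Con.conGen_mono fun p q ⟨hp, hq⟩ => ?_)
  · rw [← FreeMonoid.ofList_toList p, ← FreeMonoid.ofList_toList q]
    rcases h with ⟨h₁, h₂⟩ | ⟨i, -, -, h₁, h₂⟩ <;> rw [h₁, h₂]
    · exact ConGen.Rel.of _ _ ⟨rfl, rfl⟩
    · exact conGen_lhsᵢ_rhsᵢ hn i
  · subst hp hq
    exact .inl ⟨rfl, rfl⟩


theorem one_notMem_listPow_aw (k : ℕ) : (1 : Fin 2) ∉ listPow aw k :=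
  fun h => by simpa [aw] using mem_listPow h

theorem baPow_append_eq_append_cons {n k : ℕ} {z s t : List (Fin 2)}
    (h : baPow n k ++ z = s ++ 1 :: t) :
    (∃ j k', k = j + k' + 1 ∧ s = baPow n j ∧ t = listPow aw n ++ baPow n k' ++ z) ∨
      ∃ s', s = baPow n k ++ s' ∧ z = s' ++ 1 :: t := by
  simpa [baPow, bw] using listPow_append_eq_append_cons (p := []) List.not_mem_nil
    (one_notMem_listPow_aw n) h

theorem abPow_append_eq_append_cons {n k : ℕ} {z s t : List (Fin 2)}
    (h : abPow n k ++ z = s ++ 1 :: t) :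
    (∃ j k', k = j + k' + 1 ∧ s = abPow n j ++ listPow aw n ∧ t = abPow n k' ++ z) ∨
      ∃ s', s = abPow n k ++ s' ∧ z = s' ++ 1 :: t := by
  simpa [abPow, bw] using listPow_append_eq_append_cons (q := []) (one_notMem_listPow_aw n)
    List.not_mem_nil h

theorem eq_of_baPow_append_cons_zero {n c c' : ℕ} {x y : List (Fin 2)}
    (h : baPow n c ++ 0 :: x = baPow n c' ++ 0 :: y) : c = c' := by
  wlog hle : c ≤ c' generalizing c c' x y
  · exact (this h.symm (by omega)).symm
  obtain ⟨_ | e, rfl⟩ := Nat.exists_eq_add_of_le hle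
  · rfl
  · simp [baPow_add, baPow_succ, bw] at h

theorem abPow_append_aPow_succ_ne {n d d' : ℕ} (hd : d < d') (x y : List (Fin 2)) :
    abPow n d ++ (listPow aw (n + 1) ++ x) ≠ abPow n d' ++ y := by
  obtain ⟨e, rfl⟩ := Nat.exists_eq_add_of_lt hd
  simp [Nat.add_assoc, abPow_add, abPow_succ, listPow_succ', aw, bw]

theorem exists_abPow_append_cons_zero {n : ℕ} (hn : 1 ≤ n) (d : ℕ) (x : List (Fin 2)) :
    ∃ y, abPow n d ++ 0 :: x = 0 :: y := by
  obtain ⟨n, rfl⟩ := Nat.exists_eq_add_of_le' hn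
  cases d with
  | zero => exact ⟨x, rfl⟩
  | succ d => exact ⟨listPow aw n ++ 1 :: (abPow (n + 1) d ++ 0 :: x),
      by simp [abPow_succ, listPow_succ, aw, bw]⟩

theorem RewriteRule.exists_eq_baPow_append {m n : ℕ} (hn : 1 ≤ n) {l r : List (Fin 2)}
    (h : RewriteRule m n l r) : ∃ y, l = baPow n m ++ 0 :: y := by
  rcases h with ⟨rfl, -⟩ | ⟨i, -, -, rfl, -⟩
  · obtain ⟨y, hy⟩ := exists_abPow_append_cons_zero hn m []
    exact ⟨y, by rw [lhs₀_eq, List.append_assoc, ← hy]; rfl⟩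
  · obtain ⟨y, hy⟩ := exists_abPow_append_cons_zero hn (m - i) (listPow aw n)
    exact ⟨y, by rw [lhsᵢ_eq, List.append_assoc, ← hy, listPow_succ]; rfl⟩

theorem RewriteRule.eq_of_append_eq {m n : ℕ} {l₁ r₁ l₂ r₂ v₁ v₂ : List (Fin 2)}
    (h₁ : RewriteRule m n l₁ r₁) (h₂ : RewriteRule m n l₂ r₂) (h : l₁ ++ v₁ = l₂ ++ v₂) :
    r₁ = r₂ ∧ v₁ = v₂ := by
  rcases h₁ with ⟨rfl, rfl⟩ | ⟨i, hi, him, rfl, rfl⟩ <;>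
    rcases h₂ with ⟨rfl, rfl⟩ | ⟨i', hi', him', rfl, rfl⟩
  · simpa using h
  · simp only [lhs₀_eq, lhsᵢ_eq, List.append_assoc, List.append_cancel_left_eq] at h
    exact absurd h.symm (abPow_append_aPow_succ_ne (by omega) _ _)
  · simp only [lhs₀_eq, lhsᵢ_eq, List.append_assoc, List.append_cancel_left_eq] at h
    exact absurd h (abPow_append_aPow_succ_ne (by omega) _ _)
  · simp only [lhsᵢ_eq, List.append_assoc, List.append_cancel_left_eq] at h
    rcases lt_trichotomy (m - i) (m - i') with hlt | heq | hlt
    · exact absurd h (abPow_append_aPow_succ_ne hlt _ _)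
    · obtain rfl : i = i' := by omega
      simpa using h
    · exact absurd h.symm (abPow_append_aPow_succ_ne hlt _ _)

theorem exists_eq_baPow_append_of_overlap {m n : ℕ} {y s t : List (Fin 2)} (hs : s ≠ [])
    (h : baPow n m ++ 0 :: y = s ++ 1 :: t)
    (hc : ∀ c x, 1 :: t = baPow n c ++ 0 :: x → c = m) :
    ∃ s', s = baPow n m ++ s' ∧ 0 :: y = s' ++ 1 :: t := by
  rcases baPow_append_eq_append_cons h with ⟨j, k, rfl, rfl, rfl⟩ | h
  · have := hc (k + 1) y (by simp [baPow_succ, bw])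
    obtain rfl : j = 0 := by omega
    exact absurd rfl hs
  · exact h

theorem RewriteRule.eq_of_overlap {m n : ℕ} (hm : 1 ≤ m) (hn : 1 ≤ n)
    {l₁ r₁ l₂ r₂ s t v₁ v₂ : List (Fin 2)} (h₁ : RewriteRule m n l₁ r₁)
    (h₂ : RewriteRule m n l₂ r₂) (hl : l₁ = s ++ t) (hs : s ≠ []) (ht : t ≠ [])
    (htv : t ++ v₁ = l₂ ++ v₂) :
    ∃ j k, m = j + k + 1 ∧ r₁ = aw ∧ s = baPow n m ++ abPow n j ++ listPow aw n ∧
      t = bw ++ abPow n k ++ aw := by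
  obtain ⟨y₂, rfl⟩ := h₂.exists_eq_baPow_append hn
  obtain ⟨y₁, hy₁⟩ := h₁.exists_eq_baPow_append hn
  obtain ⟨m, rfl⟩ := Nat.exists_eq_add_of_le' hm
  obtain ⟨t, rfl⟩ : ∃ t', t = 1 :: t' := by
    obtain _ | ⟨c, t⟩ := t
    · exact absurd rfl ht
    · simp only [baPow_succ, bw, List.cons_append, List.append_assoc, List.nil_append,
        List.cons.injEq] at htv
      exact ⟨t, by rw [htv.1]⟩
  -- `t` and `l₂` are prefixes of one word, so `t` too has exactly `m + 1` leading blocks `b aⁿ`.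
  have hkey : ∀ c x, 1 :: t = baPow n c ++ 0 :: x → c = m + 1 := fun c x hx =>
    eq_of_baPow_append_cons_zero (x := x ++ v₁) (y := y₂ ++ v₂) (by simpa [hx] using htv)
  obtain ⟨s', rfl, -⟩ := exists_eq_baPow_append_of_overlap hs (hy₁.symm.trans hl) hkey
  rcases h₁ with ⟨rfl, rfl⟩ | ⟨i, hi, -, rfl, rfl⟩
  · simp only [lhs₀_eq, List.append_assoc, List.append_cancel_left_eq] at hl
    rcases abPow_append_eq_append_cons hl with ⟨j, k, hjk, rfl, rfl⟩ | ⟨s'', -, h⟩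
    · exact ⟨j, k, hjk, rfl, by simp, rfl⟩
    · exact absurd (h ▸ by simp) (by decide : (1 : Fin 2) ∉ aw)
  · simp only [lhsᵢ_eq, List.append_assoc, List.append_cancel_left_eq] at hl
    rcases abPow_append_eq_append_cons hl with ⟨j, k, hjk, -, rfl⟩ | ⟨s'', -, h⟩
    · have := hkey (k + 1) [] (by
        rw [listPow_succ', ← List.append_assoc, abPow_append_aPow, baPow_succ]; rfl)
      omega
    · exact absurd (h ▸ by simp) (one_notMem_listPow_aw (n + 1))

theorem join_overlap_lhs₀ {m n j k : ℕ} (hm : m = j + k + 1) :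
    Join (ReflTransGen (RewriteStep m n)) (listPow aw n ++ baPow n j ++ abPow n m ++ aw)
      (baPow n m ++ abPow n j ++ listPow aw n ++ aw) := by
  have h : RewriteStep m n (lhsᵢ m n (k + 1)) (rhsᵢ m n (k + 1)) :=
    Step.of_rule (Or.inr ⟨k + 1, by omega, by omega, rfl, rfl⟩)
  rw [lhsᵢ_eq, rhsᵢ_eq, show m - (k + 1) = j by omega, listPow_succ', abPow_append_aPow] at h
  exact ⟨_, .refl, .single (by simpa using h)⟩

theorem join_overlap_lhsᵢ {m n j k d : ℕ} (hn : 1 ≤ n) (hm : m = j + k + 1) :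
    Join (ReflTransGen (RewriteStep m n))
      (listPow aw n ++ baPow n j ++ abPow n d ++ listPow aw (n + 1))
      (baPow n m ++ abPow n j ++ listPow aw n ++
        (abPow n d ++ listPow aw n ++ abPow n m ++ aw)) := by
  obtain ⟨n, rfl⟩ := Nat.exists_eq_add_of_le' hn
  have hj : m - (k + 1) = j := by omega
  have h₁ : RewriteStep m (n + 1) (lhsᵢ m (n + 1) (k + 1)) (rhsᵢ m (n + 1) (k + 1)) :=
    Step.of_rule (Or.inr ⟨k + 1, by omega, by omega, rfl, rfl⟩)
  have h₂ : RewriteStep m (n + 1) (lhs₀ m (n + 1)) aw := Step.of_rule (Or.inl ⟨rfl, rfl⟩)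
  refine ⟨abPow (n + 1) j ++ listPow aw (n + 1) ++ listPow aw (n + 1) ++ baPow (n + 1) d ++ aw,
    ?_, ?_⟩
  · rw [listPow_succ' _ (n + 1)]
    simp only [List.append_assoc, abPow_append_aPow_append]
    exact .refl
  calc baPow (n + 1) m ++ abPow (n + 1) j ++ listPow aw (n + 1) ++
        (abPow (n + 1) d ++ listPow aw (n + 1) ++ abPow (n + 1) m ++ aw)
      _ = lhsᵢ m (n + 1) (k + 1) ++ (listPow aw n ++ baPow (n + 1) d ++ abPow (n + 1) m ++ aw) := by
        simp only [lhsᵢ_eq, hj, List.append_assoc, List.append_cancel_left_eq]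
        rw [abPow_append_aPow_append, listPow_append_listPow_append,
          listPow_append_listPow_append]
        ring_nf
      ReflTransGen (RewriteStep m (n + 1)) _
          (rhsᵢ m (n + 1) (k + 1) ++ (listPow aw n ++ baPow (n + 1) d ++ abPow (n + 1) m ++ aw)) :=
        .single (Step.append_right _ h₁)
      _ = abPow (n + 1) j ++ listPow aw (n + 1) ++ listPow aw (n + 1) ++ baPow (n + 1) d ++
          lhs₀ m (n + 1) := by
        simp only [rhsᵢ_eq, lhs₀_eq, hj, List.append_assoc, List.append_cancel_left_eq]
        rw [← List.append_assoc aw, ← listPow_succ, abPow_append_aPow_append,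
          baPow_append_baPow_append, baPow_append_baPow_append, Nat.add_comm m d]
      ReflTransGen (RewriteStep m (n + 1)) _
          (abPow (n + 1) j ++ listPow aw (n + 1) ++ listPow aw (n + 1) ++ baPow (n + 1) d ++ aw) :=
        .single (Step.append_left _ h₂)

theorem aw_append_eq_of_overlap {m n j k : ℕ} (hm : m = j + k + 1) {y v₁ v₂ : List (Fin 2)}
    (h : bw ++ abPow n k ++ aw ++ v₁ = baPow n m ++ y ++ v₂) :
    aw ++ v₁ = listPow aw n ++ baPow n j ++ y ++ v₂ := by
  rw [hm, show j + k + 1 = k + 1 + j by omega, baPow_add, baPow_succ] at h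
  simpa [← abPow_append_aPow_append] using h

theorem overlapsJoinable_rewriteRule {m n : ℕ} (hm : 1 ≤ m) (hn : 1 ≤ n) :
    OverlapsJoinable (RewriteRule m n) := by
  intro l₁ r₁ l₂ r₂ s t v₁ v₂ h₁ h₂ hl ht htv
  obtain rfl | hs := eq_or_ne s []
  · obtain ⟨rfl, rfl⟩ := h₁.eq_of_append_eq h₂ (by simpa [hl] using htv)
    exact ⟨_, .refl, by simpa using .refl⟩
  obtain ⟨j, k, hjk, rfl, rfl, rfl⟩ := h₁.eq_of_overlap hm hn h₂ hl hs ht htv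
  rcases h₂ with ⟨rfl, rfl⟩ | ⟨i, -, -, rfl, rfl⟩
  · rw [lhs₀_eq, List.append_assoc (baPow n m)] at htv
    rw [aw_append_eq_of_overlap hjk htv]
    simpa using join_append_right v₂ (join_overlap_lhs₀ hjk)
  · rw [lhsᵢ_eq, List.append_assoc (baPow n m)] at htv
    rw [aw_append_eq_of_overlap hjk htv, rhsᵢ_eq]
    simpa using join_append_right v₂ (join_overlap_lhsᵢ hn hjk)

/-- For `m, n ≥ 1` the rewriting system with the rules
(i) `(b a^n)^m (a^n b)^m a → a` and
(ii) `(b a^n)^m (a^n b)^{m−i} a^{n+1} → (a^n b)^{m−i} a^n (a^n b)^m a` (`1 ≤ i ≤ m`)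
(a) presents the monoid `R_{m,n} = Mon⟨a, b | (b a^n)^m (a^n b)^m a = a⟩`,
(b) is terminating, and (c) is confluent. -/
theorem rmn_rewriting_system_complete (m n : ℕ) (hm : 1 ≤ m) (hn : 1 ≤ n) :
    (∀ x y : List (Fin 2),
      Relation.EqvGen (RewriteStep m n) x y ↔
        conGen (fun p q : FreeMonoid (Fin 2) =>
            p = FreeMonoid.ofList (lhs₀ m n) ∧ q = FreeMonoid.ofList aw)
          (FreeMonoid.ofList x) (FreeMonoid.ofList y)) ∧
    WellFounded (fun x y : List (Fin 2) => RewriteStep m n y x) ∧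
    (∀ w w₁ w₂ : List (Fin 2),
      Relation.ReflTransGen (RewriteStep m n) w w₁ →
      Relation.ReflTransGen (RewriteStep m n) w w₂ →
      ∃ w₃ : List (Fin 2),
        Relation.ReflTransGen (RewriteStep m n) w₁ w₃ ∧
        Relation.ReflTransGen (RewriteStep m n) w₂ w₃) := by
  have wf := wellFounded_rewriteStep hm hn
  refine ⟨fun x y => ?_, wf, fun w w₁ w₂ h₁ h₂ => ?_⟩
  · rw [← conGen_rewriteRule_eq hn]
    exact eqvGen_step_iff_conGen
  · exact join_of_reflTransGen_of_wellFounded wf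
      (overlapsJoinable_rewriteRule hm hn).join_of_step_of_step h₁ h₂
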